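/- Let f : ℝ^d → ℝ be measurable with all level sets of Lebesgue measure zero, and let m ∈ ℝ^d be a p-critical point such that the success probabilities decay summably along geometric step-size sequences: ∑_{k=0}^∞ p_f^≤(m, e^{k·c_-}) < ∞. Then for every ρ < 1 there exists K ∈ ℕ such that the (1+1)-ES started from the initial state m^(0) = m, σ^(0) = e^{K·c_-} satisfies Pr(m^(t) = m for all t ∈ ℕ) ≥ ρ; in particular the algorithm converges to m with probability at least ρ. -/

import Mathlib

open MeasureTheory Set Filter

/-- Isotropic Gaussian measure `N(m, σ²I)` on `ℝ^d`, defined by its density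
`x ↦ (2π)^{-d/2} σ^{-d} exp(−‖x−m‖²/(2σ²))` w.r.t. Lebesgue measure. -/
noncomputable def gaussES (d : ℕ) (m : EuclideanSpace ℝ (Fin d)) (σ : ℝ) :
    Measure (EuclideanSpace ℝ (Fin d)) :=
  volume.withDensity fun x =>
    ENNReal.ofReal ((2 * Real.pi) ^ (-(d : ℝ) / 2) * (σ ^ d)⁻¹ *
      Real.exp (-‖x - m‖ ^ 2 / (2 * σ ^ 2)))

/-- Success probability of strict improvement: `p_f^<(m,σ)`. -/
noncomputable def pLt (d : ℕ) (f : EuclideanSpace ℝ (Fin d) → ℝ)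
    (m : EuclideanSpace ℝ (Fin d)) (σ : ℝ) : ENNReal :=
  gaussES d m σ {x | f x < f m}

/-- Success probability of weak improvement: `p_f^≤(m,σ)`. -/
noncomputable def pLe (d : ℕ) (f : EuclideanSpace ℝ (Fin d) → ℝ)
    (m : EuclideanSpace ℝ (Fin d)) (σ : ℝ) : ENNReal :=
  gaussES d m σ {x | f x ≤ f m}

/-- Lower step-size threshold `ξ_p^f(m) = inf {σ > 0 | p_f^<(m,σ) ≤ p}`, with `inf ∅ = ∞`. -/
noncomputable def xiES (d : ℕ) (f : EuclideanSpace ℝ (Fin d) → ℝ) (p : ℝ)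
    (m : EuclideanSpace ℝ (Fin d)) : ENNReal :=
  sInf {s : ENNReal | ∃ σ : ℝ, 0 < σ ∧ s = ENNReal.ofReal σ ∧ pLt d f m σ ≤ ENNReal.ofReal p}

/-- Upper step-size threshold `η_p^f(m) = sup {σ > 0 | p_f^≤(m,σ) ≥ p}`, with `sup ∅ = 0`. -/
noncomputable def etaES (d : ℕ) (f : EuclideanSpace ℝ (Fin d) → ℝ) (p : ℝ)
    (m : EuclideanSpace ℝ (Fin d)) : ENNReal :=
  sSup {s : ENNReal | ∃ σ : ℝ, 0 < σ ∧ s = ENNReal.ofReal σ ∧ ENNReal.ofReal p ≤ pLe d f m σ}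

open scoped ENNReal NNReal

/-!
The step size is only decreased while the search stays at `m`, so the run started with step size
`e^{K c₋}` stays at `m` forever unless at some time `t` the sample drawn with step size
`e^{(t + K) c₋}` is accepted. By the union bound this happens with probability at most the tail
`∑_{k ≥ K} p_f^≤(m, e^{k c₋})` of a convergent series, which is below `1 - ρ` for `K` large.
-/

noncomputable def gaussDensity (d : ℕ) (m : EuclideanSpace ℝ (Fin d)) (σ : ℝ)
    (x : EuclideanSpace ℝ (Fin d)) : ℝ :=
  (2 * Real.pi) ^ (-(d : ℝ) / 2) * (σ ^ d)⁻¹ * Real.exp (-‖x - m‖ ^ 2 / (2 * σ ^ 2))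

theorem gaussES_eq_withDensity (d : ℕ) (m : EuclideanSpace ℝ (Fin d)) (σ : ℝ) :
    gaussES d m σ = volume.withDensity fun x => ENNReal.ofReal (gaussDensity d m σ x) := rfl

theorem measurable_gaussDensity (d : ℕ) (m : EuclideanSpace ℝ (Fin d)) (σ : ℝ) :
    Measurable (gaussDensity d m σ) := by
  unfold gaussDensity
  fun_prop

theorem gaussDensity_add_smul (d : ℕ) (m x : EuclideanSpace ℝ (Fin d)) {σ : ℝ} (hσ : 0 < σ) :
    gaussDensity d 0 1 x = σ ^ d * gaussDensity d m σ (m + σ • x) := by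
  simp only [gaussDensity, add_sub_cancel_left, sub_zero, norm_smul, Real.norm_eq_abs,
    abs_of_pos hσ, one_pow, inv_one, mul_one]
  field_simp

theorem map_add_smul_addHaar {E : Type*} [NormedAddCommGroup E] [NormedSpace ℝ E]
    [MeasurableSpace E] [BorelSpace E] [FiniteDimensional ℝ E] (μ : Measure E)
    [μ.IsAddHaarMeasure] (m : E) {σ : ℝ} (hσ : σ ≠ 0) :
    μ.map (fun x => m + σ • x) = ENNReal.ofReal |(σ ^ Module.finrank ℝ E)⁻¹| • μ := by
  rw [show (fun x => m + σ • x) = (m + ·) ∘ (σ • ·) from rfl,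
    ← Measure.map_map (measurable_const_add m) (measurable_const_smul σ),
    Measure.map_addHaar_smul μ hσ, Measure.map_smul, map_add_left_eq_self]

theorem map_withDensity_comp {α β : Type*} [MeasurableSpace α] [MeasurableSpace β]
    (μ : Measure α) {g : α → β} (hg : Measurable g) {f : β → ℝ≥0∞} (hf : Measurable f) :
    (μ.withDensity (f ∘ g)).map g = (μ.map g).withDensity f := by
  ext s hs
  rw [Measure.map_apply hg hs, withDensity_apply _ (hg hs), withDensity_apply _ hs,
    setLIntegral_map hs hf hg, Function.comp_def]

theorem gaussES_map_add_smul (d : ℕ) (m : EuclideanSpace ℝ (Fin d)) {σ : ℝ} (hσ : 0 < σ) :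
    (gaussES d 0 1).map (fun x => m + σ • x) = gaussES d m σ := by
  have hσd : 0 < σ ^ d := pow_pos hσ d
  have hdens : (fun x => ENNReal.ofReal (gaussDensity d 0 1 x)) =
      (ENNReal.ofReal (σ ^ d) • fun y => ENNReal.ofReal (gaussDensity d m σ y)) ∘
        fun x => m + σ • x := by
    ext x
    simp [gaussDensity_add_smul d m x hσ, ENNReal.ofReal_mul hσd.le]
  rw [gaussES_eq_withDensity, hdens,
    map_withDensity_comp _ (by fun_prop)
      ((measurable_gaussDensity d m σ).ennreal_ofReal.const_smul _),
    map_add_smul_addHaar _ _ hσ.ne', withDensity_smul_measure,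
    withDensity_smul' _ _ ENNReal.ofReal_ne_top, smul_smul, finrank_euclideanSpace_fin,
    abs_of_pos (inv_pos.2 hσd), ← ENNReal.ofReal_mul (inv_pos.2 hσd).le,
    inv_mul_cancel₀ hσd.ne', ENNReal.ofReal_one, one_smul, gaussES_eq_withDensity]

instance isProbabilityMeasure_gaussES_zero_one (d : ℕ) :
    IsProbabilityMeasure (gaussES d 0 1) := by
  have hint : ∫ x : EuclideanSpace ℝ (Fin d), Real.exp (-(1 / 2) * ‖x‖ ^ 2)
      = (2 * Real.pi) ^ ((d : ℝ) / 2) := by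
    rw [GaussianFourier.integral_rexp_neg_mul_sq_norm one_half_pos, finrank_euclideanSpace_fin]
    congr 1
    field_simp
  have hdens : gaussDensity d 0 1 =
      fun x => (2 * Real.pi) ^ (-(d : ℝ) / 2) * Real.exp (-(1 / 2) * ‖x‖ ^ 2) := by
    ext x
    simp only [gaussDensity, sub_zero, one_pow, inv_one, mul_one]
    ring_nf
  constructor
  rw [gaussES_eq_withDensity, withDensity_apply _ MeasurableSet.univ, Measure.restrict_univ, hdens,
    ← ofReal_integral_eq_lintegral_ofReal
      ((Integrable.of_integral_ne_zero (by rw [hint]; positivity)).const_mul _)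
      (.of_forall fun x => by positivity),
    integral_const_mul, hint, neg_div, Real.rpow_neg (by positivity),
    inv_mul_cancel₀ (by positivity), ENNReal.ofReal_one]

theorem isProbabilityMeasure_gaussES (d : ℕ) (m : EuclideanSpace ℝ (Fin d)) {σ : ℝ}
    (hσ : 0 < σ) : IsProbabilityMeasure (gaussES d m σ) :=
  gaussES_map_add_smul d m hσ ▸ Measure.isProbabilityMeasure_map (by fun_prop)

theorem pLe_ne_top (d : ℕ) (f : EuclideanSpace ℝ (Fin d) → ℝ) (m : EuclideanSpace ℝ (Fin d))
    {σ : ℝ} (hσ : 0 < σ) : pLe d f m σ ≠ ∞ :=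
  have := isProbabilityMeasure_gaussES d m hσ
  measure_ne_top _ _

-- Only an inequality: `f` is not assumed measurable, so `{x | f x ≤ f m}` need not be.
theorem measure_le_pLe {d : ℕ} (f : EuclideanSpace ℝ (Fin d) → ℝ) (m : EuclideanSpace ℝ (Fin d))
    {Ω : Type*} [MeasurableSpace Ω] {μ : Measure Ω} {ζ : Ω → EuclideanSpace ℝ (Fin d)}
    (hζ : Measurable ζ) (hlaw : μ.map ζ = gaussES d 0 1) {σ : ℝ} (hσ : 0 < σ) :
    μ {ω | f (m + σ • ζ ω) ≤ f m} ≤ pLe d f m σ := by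
  have hT : Measurable fun x : EuclideanSpace ℝ (Fin d) => m + σ • x := by fun_prop
  calc μ {ω | f (m + σ • ζ ω) ≤ f m}
      ≤ μ.map ((fun x => m + σ • x) ∘ ζ) {x | f x ≤ f m} :=
        Measure.le_map_apply (hT.comp hζ).aemeasurable _
    _ = pLe d f m σ := by rw [← Measure.map_map hT hζ, hlaw, gaussES_map_add_smul d m hσ, pLe]

theorem ENNReal.tsum_ne_top_of_summable_toReal {α : Type*} {f : α → ℝ≥0∞} (hf : ∀ a, f a ≠ ∞)
    (hsum : Summable fun a => (f a).toReal) : ∑' a, f a ≠ ∞ := by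
  lift f to α → ℝ≥0 using hf
  exact ENNReal.tsum_coe_ne_top_iff_summable.2 (NNReal.summable_coe.1 hsum)

theorem one_sub_tsum_le_measure_iInter_compl {Ω ι : Type*} [MeasurableSpace Ω] [Countable ι]
    (μ : Measure Ω) [IsProbabilityMeasure μ] (B : ι → Set Ω) :
    1 - ∑' i, μ (B i) ≤ μ (⋂ i, (B i)ᶜ) := by
  rw [tsub_le_iff_left, ← compl_iUnion, ← measure_univ (μ := μ), ← union_compl_self (⋃ i, B i)]
  exact (measure_union_le _ _).trans (add_le_add_left (measure_iUnion_le B) _)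

theorem trajectory_eq_of_forall_rejected {E : Type*} [Add E] [SMul ℝ E] (f : E → ℝ) (m : E)
    (z mm : ℕ → E) (σ₀ r : ℝ) (ss : ℕ → ℝ) (h0m : mm 0 = m) (h0s : ss 0 = σ₀)
    (hstep : ∀ t, ¬ f (mm t + ss t • z t) ≤ f (mm t) →
      mm (t + 1) = mm t ∧ ss (t + 1) = ss t * r)
    (hrejected : ∀ t, ¬ f (m + (σ₀ * r ^ t) • z t) ≤ f m) (t : ℕ) :
    mm t = m ∧ ss t = σ₀ * r ^ t := by
  induction t with
  | zero => exact ⟨h0m, by rw [h0s, pow_zero, mul_one]⟩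
  | succ t ih =>
    obtain ⟨hm, hs⟩ := hstep t (by rw [ih.1, ih.2]; exact hrejected t)
    exact ⟨hm.trans ih.1, by rw [hs, ih.2, pow_succ, mul_assoc]⟩

theorem premature_convergence_general
    (d : ℕ)
    (cp cm : ℝ)
    (f : EuclideanSpace ℝ (Fin d) → ℝ)
    (m : EuclideanSpace ℝ (Fin d))
    (hsum : Summable (fun k : ℕ => (pLe d f m (Real.exp (k * cm))).toReal))
    {Ω : Type*} [MeasurableSpace Ω] (μ : Measure Ω) [IsProbabilityMeasure μ]
    (z : ℕ → Ω → EuclideanSpace ℝ (Fin d))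
    (hzmeas : ∀ t, Measurable (z t))
    (hzlaw : ∀ t, μ.map (z t) = gaussES d 0 1) :
    ∀ ρ : ℝ, ρ < 1 → ∃ K : ℕ,
      ∀ (mm : ℕ → Ω → EuclideanSpace ℝ (Fin d)) (ss : ℕ → Ω → ℝ),
        (∀ ω, mm 0 ω = m) → (∀ ω, ss 0 ω = Real.exp (K * cm)) →
        (∀ (t : ℕ) (ω : Ω),
          (f (mm t ω + ss t ω • z t ω) ≤ f (mm t ω) →
            mm (t + 1) ω = mm t ω + ss t ω • z t ω ∧ ss (t + 1) ω = ss t ω * Real.exp cp) ∧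
          (¬ f (mm t ω + ss t ω • z t ω) ≤ f (mm t ω) →
            mm (t + 1) ω = mm t ω ∧ ss (t + 1) ω = ss t ω * Real.exp cm)) →
        ENNReal.ofReal ρ ≤ μ {ω | ∀ t : ℕ, mm t ω = m} := by
  intro ρ hρ
  have hfin : ∑' k : ℕ, pLe d f m (Real.exp (k * cm)) ≠ ∞ :=
    ENNReal.tsum_ne_top_of_summable_toReal (fun k => pLe_ne_top d f m (Real.exp_pos _)) hsum
  obtain ⟨K, hK⟩ : ∃ K : ℕ,
      ∑' t : ℕ, pLe d f m (Real.exp ((t + K : ℕ) * cm)) < ENNReal.ofReal (1 - ρ) :=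
    ((ENNReal.tendsto_sum_nat_add _ hfin).eventually_lt_const (by simpa using hρ)).exists
  refine ⟨K, fun mm ss h0m h0s hstep => ?_⟩
  have hσ : ∀ t : ℕ, Real.exp (K * cm) * Real.exp cm ^ t = Real.exp ((t + K : ℕ) * cm) := by
    intro t
    rw [← Real.exp_nat_mul, ← Real.exp_add]
    push_cast
    ring_nf
  set B : ℕ → Set Ω := fun t =>
    {ω | f (m + (Real.exp (K * cm) * Real.exp cm ^ t) • z t ω) ≤ f m}
  have hB : ∀ t, μ (B t) ≤ pLe d f m (Real.exp ((t + K : ℕ) * cm)) := fun t =>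
    hσ t ▸ measure_le_pLe f m (hzmeas t) (hzlaw t) (by positivity)
  have hstay : ⋂ t, (B t)ᶜ ⊆ {ω | ∀ t, mm t ω = m} := fun ω hω t =>
    (trajectory_eq_of_forall_rejected f m (z · ω) (mm · ω) _ _ (ss · ω) (h0m ω) (h0s ω)
      (fun t => (hstep t ω).2) (by simpa [B] using hω) t).1
  calc ENNReal.ofReal ρ = 1 - ENNReal.ofReal (1 - ρ) := by
        rw [← ENNReal.ofReal_one, ← ENNReal.ofReal_sub _ (by linarith), sub_sub_cancel]
    _ ≤ 1 - ∑' t, μ (B t) := tsub_le_tsub_left ((ENNReal.tsum_le_tsum hB).trans hK.le) 1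
    _ ≤ μ (⋂ t, (B t)ᶜ) := one_sub_tsum_le_measure_iInter_compl μ B
    _ ≤ μ {ω | ∀ t, mm t ω = m} := measure_mono hstay

/-- Premature convergence at a `p`-critical point. Let `f` be
measurable with Lebesgue-null level sets and let `m` be `p`-critical
(`ξ_p^f(m) = 0` for every `p > 0`) with summable success probabilities along the
geometric step-size sequence: `∑_k p_f^≤(m, e^{k·c₋}) < ∞`. Then for every `ρ < 1`
there is `K ∈ ℕ` such that the (1+1)-ES started at `m⁰ = m`, `σ⁰ = e^{K·c₋}`
stays at `m` forever with probability at least `ρ`. -/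
theorem premature_convergence
    (d : ℕ) (hd : 1 ≤ d)
    (cp cm : ℝ) (hcp : 0 < cp) (hcm : cm < 0) (hcpm : -cm < cp)
    (f : EuclideanSpace ℝ (Fin d) → ℝ) (hf : Measurable f)
    (hlevel : ∀ y : ℝ, volume {x : EuclideanSpace ℝ (Fin d) | f x = y} = 0)
    (m : EuclideanSpace ℝ (Fin d))
    (hcrit : ∀ p : ℝ, 0 < p → xiES d f p m = 0)
    (hsum : Summable (fun k : ℕ => (pLe d f m (Real.exp (k * cm))).toReal))
    {Ω : Type*} [MeasurableSpace Ω] (μ : Measure Ω) [IsProbabilityMeasure μ]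
    (z : ℕ → Ω → EuclideanSpace ℝ (Fin d))
    (hzmeas : ∀ t, Measurable (z t))
    (hzindep : ProbabilityTheory.iIndepFun z μ)
    (hzlaw : ∀ t, μ.map (z t) = gaussES d 0 1) :
    ∀ ρ : ℝ, ρ < 1 → ∃ K : ℕ,
      ∀ (mm : ℕ → Ω → EuclideanSpace ℝ (Fin d)) (ss : ℕ → Ω → ℝ),
        (∀ ω, mm 0 ω = m) → (∀ ω, ss 0 ω = Real.exp (K * cm)) →
        (∀ (t : ℕ) (ω : Ω),
          (f (mm t ω + ss t ω • z t ω) ≤ f (mm t ω) →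
            mm (t + 1) ω = mm t ω + ss t ω • z t ω ∧ ss (t + 1) ω = ss t ω * Real.exp cp) ∧
          (¬ f (mm t ω + ss t ω • z t ω) ≤ f (mm t ω) →
            mm (t + 1) ω = mm t ω ∧ ss (t + 1) ω = ss t ω * Real.exp cm)) →
        ENNReal.ofReal ρ ≤ μ {ω | ∀ t : ℕ, mm t ω = m} :=
  premature_convergence_general d cp cm f m hsum μ z hzmeas hzlaw
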